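/- arXiv:2403.03313 — 8 statements merged into one kernel-verified Lean document; each statement's English description precedes it below -/
import Mathlib

section
/- Let B, D > 0 and A, C ∈ ℝ. The system x₂ = (1/B) x₁ (x₁ - A), x₁ = (1/D) x₂ (x₂ - C) has a solution (x₁, x₂) with x₁ > 0 and x₂ > 0 if and only if A ≥ 0, or C ≥ 0, or (A < 0 and C < 0 and D B > A C). Moreover, when a positive solution exists it is unique. -/
/-!
Clearing denominators, a positive solution satisfies `B x₂ = x₁ (x₁ - A)` and
`D x₁ = x₂ (x₂ - C)`, so `x₁ > A`, `x₂ > C`, and multiplying the two equations puts it on the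
hyperbola `(x₁ - A) (x₂ - C) = B D`. For `A, C < 0` this forces `B D > A C`. Along the first
parabola `x₂` increases with `x₁`, so two positive solutions would be strictly ordered in both
coordinates, which the hyperbola forbids. Conversely, substituting the parabola into the
hyperbola gives a cubic in `x₁` that is negative at `max 0 A` exactly under the stated
condition and tends to `+∞`, so the intermediate value theorem yields a solution.
-/

open Filter

structure IsPositiveSolution (A B C D x₁ x₂ : ℝ) : Prop where
  fst_pos : 0 < x₁
  snd_pos : 0 < x₂
  snd_eq : x₂ = 1 / B * x₁ * (x₁ - A)
  fst_eq : x₁ = 1 / D * x₂ * (x₂ - C)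

namespace IsPositiveSolution

variable {A B C D x₁ x₂ x₁' x₂' : ℝ}

theorem swap (h : IsPositiveSolution A B C D x₁ x₂) : IsPositiveSolution C D A B x₂ x₁ :=
  ⟨h.snd_pos, h.fst_pos, h.fst_eq, h.snd_eq⟩

theorem mul_snd (hB : 0 < B) (h : IsPositiveSolution A B C D x₁ x₂) :
    B * x₂ = x₁ * (x₁ - A) := by
  rw [h.snd_eq]
  field_simp

theorem lt_fst (hB : 0 < B) (h : IsPositiveSolution A B C D x₁ x₂) : A < x₁ := by
  have := h.mul_snd hB
  nlinarith [mul_pos hB h.snd_pos, h.fst_pos]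

theorem mul_sub_eq (hB : 0 < B) (hD : 0 < D) (h : IsPositiveSolution A B C D x₁ x₂) :
    (x₁ - A) * (x₂ - C) = B * D := by
  have h₁ := h.mul_snd hB
  have h₂ := h.swap.mul_snd hD
  apply mul_left_cancel₀ (mul_pos h.fst_pos h.snd_pos).ne'
  linear_combination (-(x₁ * (x₁ - A))) * h₂ - D * x₁ * h₁

theorem condition (hB : 0 < B) (hD : 0 < D) (h : IsPositiveSolution A B C D x₁ x₂) :
    0 ≤ A ∨ 0 ≤ C ∨ (A < 0 ∧ C < 0 ∧ A * C < D * B) := by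
  rcases le_or_gt 0 A with hA | hA
  · exact .inl hA
  rcases le_or_gt 0 C with hC | hC
  · exact .inr (.inl hC)
  refine .inr (.inr ⟨hA, hC, ?_⟩)
  have := h.mul_sub_eq hB hD
  nlinarith [mul_pos (neg_pos.2 hC) h.fst_pos, mul_pos (neg_pos.2 hA) h.snd_pos,
    mul_pos h.fst_pos h.snd_pos]

theorem fst_le (hB : 0 < B) (hD : 0 < D) (h : IsPositiveSolution A B C D x₁ x₂)
    (h' : IsPositiveSolution A B C D x₁' x₂') : x₁ ≤ x₁' := by
  by_contra! hlt
  have hx₂ : x₂' < x₂ := by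
    have := h.mul_snd hB
    have := h'.mul_snd hB
    nlinarith [h'.fst_pos, h'.lt_fst hB]
  have := h.mul_sub_eq hB hD
  have := h'.mul_sub_eq hB hD
  nlinarith [h'.lt_fst hB, h'.swap.lt_fst hD]

theorem unique (hB : 0 < B) (hD : 0 < D) (h : IsPositiveSolution A B C D x₁ x₂)
    (h' : IsPositiveSolution A B C D x₁' x₂') : x₁ = x₁' ∧ x₂ = x₂' :=
  ⟨(h.fst_le hB hD h').antisymm (h'.fst_le hB hD h),
    (h.swap.fst_le hD hB h'.swap).antisymm (h'.swap.fst_le hD hB h.swap)⟩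

end IsPositiveSolution

/-- The hyperbola `(x₁ - A) (x₂ - C) = B D` evaluated on the parabola `x₂ = x₁ (x₁ - A) / B`. -/
noncomputable def hyperbolaDefect (A B C D x : ℝ) : ℝ :=
  (x - A) * (1 / B * x * (x - A) - C) - B * D

theorem continuous_hyperbolaDefect (A B C D : ℝ) : Continuous (hyperbolaDefect A B C D) := by
  unfold hyperbolaDefect
  fun_prop

theorem tendsto_hyperbolaDefect_atTop {B : ℝ} (hB : 0 < B) (A C D : ℝ) :
    Tendsto (hyperbolaDefect A B C D) atTop atTop := by
  have hsub : Tendsto (fun x : ℝ => x - A) atTop atTop := tendsto_atTop_add_const_right _ _ tendsto_id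
  have hpar : Tendsto (fun x : ℝ => 1 / B * x * (x - A) - C) atTop atTop := by
    refine tendsto_atTop_add_const_right _ _ ?_
    simp_rw [mul_assoc]
    exact (tendsto_id.atTop_mul_atTop₀ hsub).const_mul_atTop (by positivity)
  exact tendsto_atTop_add_const_right _ _ (hsub.atTop_mul_atTop₀ hpar)

theorem hyperbolaDefect_max_neg {A B C D : ℝ} (hB : 0 < B) (hD : 0 < D)
    (h : 0 ≤ A ∨ 0 ≤ C ∨ (A < 0 ∧ C < 0 ∧ A * C < D * B)) :
    hyperbolaDefect A B C D (max 0 A) < 0 := by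
  unfold hyperbolaDefect
  rcases le_total A 0 with hA | hA
  · have hAC : A * C < D * B := by
      rcases h with h | h | h
      · obtain rfl := le_antisymm hA h
        simpa using mul_pos hD hB
      · nlinarith [mul_pos hD hB, mul_nonpos_of_nonpos_of_nonneg hA h]
      · exact h.2.2
    rw [max_eq_left hA]
    nlinarith
  · rw [max_eq_right hA]
    nlinarith [mul_pos hB hD]

theorem isPositiveSolution_of_hyperbolaDefect_eq_zero {A B C D x : ℝ} (hB : 0 < B)
    (hD : 0 < D) (hx : max 0 A < x) (h : hyperbolaDefect A B C D x = 0) :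
    IsPositiveSolution A B C D x (1 / B * x * (x - A)) := by
  rw [max_lt_iff] at hx
  have hxA : 0 < x - A := sub_pos.2 hx.2
  refine ⟨hx.1, by have := hx.1; positivity, rfl, ?_⟩
  unfold hyperbolaDefect at h
  field_simp at h ⊢
  linear_combination (-x) * h

theorem exists_isPositiveSolution {A B C D : ℝ} (hB : 0 < B) (hD : 0 < D)
    (h : 0 ≤ A ∨ 0 ≤ C ∨ (A < 0 ∧ C < 0 ∧ A * C < D * B)) :
    ∃ x₁ x₂, IsPositiveSolution A B C D x₁ x₂ := by
  obtain ⟨x, hx, hzero⟩ := intermediate_value_Ioi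
    (continuous_hyperbolaDefect A B C D).continuousOn (tendsto_hyperbolaDefect_atTop hB A C D)
    (hyperbolaDefect_max_neg hB hD h)
  exact ⟨x, _, isPositiveSolution_of_hyperbolaDefect_eq_zero hB hD hx hzero⟩

theorem stmt_1 (A B C D : ℝ) (hB : 0 < B) (hD : 0 < D) :
    ((∃ x₁ x₂ : ℝ, 0 < x₁ ∧ 0 < x₂ ∧
        x₂ = (1 / B) * x₁ * (x₁ - A) ∧ x₁ = (1 / D) * x₂ * (x₂ - C)) ↔
      (0 ≤ A ∨ 0 ≤ C ∨ (A < 0 ∧ C < 0 ∧ A * C < D * B))) ∧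
    (∀ x₁ x₂ x₁' x₂' : ℝ, 0 < x₁ → 0 < x₂ →
      x₂ = (1 / B) * x₁ * (x₁ - A) → x₁ = (1 / D) * x₂ * (x₂ - C) →
      0 < x₁' → 0 < x₂' →
      x₂' = (1 / B) * x₁' * (x₁' - A) → x₁' = (1 / D) * x₂' * (x₂' - C) →
      x₁ = x₁' ∧ x₂ = x₂') := by
  refine ⟨⟨?_, fun h => ?_⟩, ?_⟩
  · rintro ⟨x₁, x₂, h₁, h₂, e₁, e₂⟩
    exact IsPositiveSolution.condition hB hD ⟨h₁, h₂, e₁, e₂⟩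
  · obtain ⟨x₁, x₂, ⟨h₁, h₂, e₁, e₂⟩⟩ := exists_isPositiveSolution hB hD h
    exact ⟨x₁, x₂, h₁, h₂, e₁, e₂⟩
  · intro x₁ x₂ x₁' x₂' h₁ h₂ e₁ e₂ h₁' h₂' e₁' e₂'
    exact IsPositiveSolution.unique hB hD ⟨h₁, h₂, e₁, e₂⟩ ⟨h₁', h₂', e₁', e₂'⟩
end

section
/- Let a, m, q > 0 and R ∈ (0,1), and define A, B, C, D as A = (1/a)(1-R)(a - qE - mR), B = (m/a)(1-R)², C = (R/a)(a - m(1-R)), D = (m/a)R². If m ≤ a, or E < a/q, or (a < m and E > a/q and R > (1 - a/(qE))(1 - a/m)), then either A ≥ 0, or C ≥ 0, or (A < 0, C < 0 and D B > A C). -/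
theorem stmt_3 (a m q R E : ℝ) (ha : 0 < a) (hm : 0 < m) (hq : 0 < q)
    (hR : R ∈ Set.Ioo (0 : ℝ) 1) (hE : 0 < E)
    (A B C D : ℝ)
    (hA : A = (1 / a) * (1 - R) * (a - q * E - m * R))
    (hB : B = (m / a) * (1 - R) ^ 2)
    (hC : C = (R / a) * (a - m * (1 - R)))
    (hD : D = (m / a) * R ^ 2)
    (h : m ≤ a ∨ E < a / q ∨
      (a < m ∧ a / q < E ∧ (1 - (a / q) / E) * (1 - a / m) < R)) :
    0 ≤ A ∨ 0 ≤ C ∨ (A < 0 ∧ C < 0 ∧ A * C < D * B) := by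
  obtain ⟨hR0, hR1⟩ := hR
  have h1R : 0 < 1 - R := by linarith
  by_cases hAn : 0 ≤ A
  · exact Or.inl hAn
  by_cases hCn : 0 ≤ C
  · exact Or.inr (Or.inl hCn)
  push_neg at hAn hCn
  refine Or.inr (Or.inr ⟨hAn, hCn, ?_⟩)
  have hX : a - q * E - m * R < 0 := by
    rw [hA] at hAn
    nlinarith [mul_pos (by positivity : (0:ℝ) < 1/a) h1R]
  have hY : a - m * (1 - R) < 0 := by
    rw [hC] at hCn
    nlinarith [mul_pos (by positivity : (0:ℝ) < R/a) hR0]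
  have key : (a - q * E - m * R) * (a - m * (1 - R)) < m ^ 2 * R * (1 - R) := by
    rcases h with hma | hEa | ⟨ham, hEa, hRc⟩
    · nlinarith
    · have : q * E < a := by
        rw [lt_div_iff₀ hq] at hEa; linarith
      nlinarith [mul_pos hR0 h1R, mul_pos hm hR0, mul_pos hm h1R]
    · have hqE : a < q * E := by
        rw [div_lt_iff₀ hq] at hEa; linarith
      have hqE0 : 0 < q * E := by linarith
      have hRc' : (q * E - a) * (m - a) < m * R * (q * E) := by
        have h1 : (1 - (a / q) / E) = (q * E - a) / (q * E) := by
          field_simp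
        have h2 : (1 - a / m) = (m - a) / m := by field_simp
        rw [h1, h2, div_mul_div_comm, div_lt_iff₀ (by positivity)] at hRc
        nlinarith
      nlinarith
  rw [hA, hB, hC, hD]
  have ha2 : (0:ℝ) < 1 / a ^ 2 := by positivity
  have expand : (1 / a * (1 - R) * (a - q * E - m * R)) * (R / a * (a - m * (1 - R)))
      = (1 / a ^ 2) * (R * (1 - R)) * ((a - q * E - m * R) * (a - m * (1 - R))) := by
    field_simp
  have expand2 : (m / a * R ^ 2) * (m / a * (1 - R) ^ 2)
      = (1 / a ^ 2) * (R * (1 - R)) * (m ^ 2 * R * (1 - R)) := by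
    field_simp
  rw [expand, expand2]
  have := mul_pos hR0 h1R
  exact mul_lt_mul_of_pos_left key (by positivity)
end

section
/- Let a, b, c, d, q_x, q_y > 0 with a > b > c > d, set A = b c d/(a(c-d)), B' = b - c + b c/(c-d), Q = (√(B'² + 4Aa) - B')/(2A). If q_x/q_y < Q, then a q_y > (c - 2d) q_x; equivalently, the prey-only catch maximizer E₂ = a/(2 q_x) exceeds the predator extinction threshold E_y-ext = a(c-d)/(a q_y + c q_x). -/
/-! `Q` is the positive root of `A Q² + B' Q = a`. Since `B' > c > c - 2d` and `B' > 0`, every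
`0 ≤ t < Q` satisfies `(c - 2d) t ≤ B' t ≤ B' Q < A Q² + B' Q = a`; taking `t = q_x / q_y` gives
`(c - 2d) q_x < a q_y`, and clearing denominators shows this is exactly `E_y-ext < E₂`. -/

open Real

theorem quadratic_root_eq {A B a : ℝ} (hA : A ≠ 0) (hD : 0 ≤ B ^ 2 + 4 * A * a) :
    A * ((√(B ^ 2 + 4 * A * a) - B) / (2 * A)) ^ 2 + B * ((√(B ^ 2 + 4 * A * a) - B) / (2 * A))
      = a := by
  have hs : discrim A B (-a) = √(B ^ 2 + 4 * A * a) * √(B ^ 2 + 4 * A * a) := by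
    rw [mul_self_sqrt hD, discrim]; ring
  have := (quadratic_eq_zero_iff hA hs ((√(B ^ 2 + 4 * A * a) - B) / (2 * A))).2
    (Or.inl (by ring))
  linear_combination this

theorem mul_lt_of_lt_quadratic_root {A B a k t x : ℝ} (hA : 0 < A) (hB : 0 ≤ B) (hkB : k ≤ B)
    (ht : 0 ≤ t) (htx : t < x) (hx : A * x ^ 2 + B * x = a) : k * t < a := by
  have hAx : 0 < A * x ^ 2 := by have := ht.trans_lt htx; positivity
  calc k * t ≤ B * t := mul_le_mul_of_nonneg_right hkB ht
    _ ≤ B * x := mul_le_mul_of_nonneg_left htx.le hB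
    _ < A * x ^ 2 + B * x := by linarith
    _ = a := hx

theorem lt_sub_add_mul_div_sub {b c d : ℝ} (hd : 0 < d) (hdc : d < c) (hcb : c < b) :
    c < b - c + b * c / (c - d) := by
  have hc : c < b * c / (c - d) := by
    rw [lt_div_iff₀ (sub_pos.2 hdc)]
    nlinarith
  linarith

theorem extinction_effort_lt_prey_optimum_iff {a c d qx qy : ℝ} (ha : 0 < a) (hqx : 0 < qx)
    (hden : 0 < a * qy + c * qx) :
    a * (c - d) / (a * qy + c * qx) < a / (2 * qx) ↔ (c - 2 * d) * qx < a * qy := by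
  rw [div_lt_div_iff₀ hden (by positivity), mul_assoc, mul_lt_mul_iff_right₀ ha]
  constructor <;> intro h <;> linarith

theorem stmt_10 (a b c d qx qy : ℝ) (hd : 0 < d) (hdc : d < c) (hcb : c < b)
    (hba : b < a) (hqx : 0 < qx) (hqy : 0 < qy)
    (hQ : qx / qy <
      (Real.sqrt ((b - c + b * c / (c - d)) ^ 2 + 4 * (b * c * d / (a * (c - d))) * a) -
        (b - c + b * c / (c - d))) / (2 * (b * c * d / (a * (c - d))))) :
    (c - 2 * d) * qx < a * qy ∧
    a * (c - d) / (a * qy + c * qx) < a / (2 * qx) := by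
  have hc : 0 < c := hd.trans hdc
  have ha : 0 < a := hc.trans (hcb.trans hba)
  have hA : 0 < b * c * d / (a * (c - d)) := by have := hc.trans hcb; positivity
  have hB := lt_sub_add_mul_div_sub hd hdc hcb
  have hroot := quadratic_root_eq (B := b - c + b * c / (c - d)) (a := a) hA.ne' (by positivity)
  have hratio : (c - 2 * d) * (qx / qy) < a :=
    mul_lt_of_lt_quadratic_root hA (by linarith) (by linarith) (by positivity) hQ hroot
  have hyield : (c - 2 * d) * qx < a * qy := by
    rwa [← mul_div_assoc, div_lt_iff₀ hqy] at hratio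
  exact ⟨hyield, (extinction_effort_lt_prey_optimum_iff ha hqx (by positivity)).2 hyield⟩
end

section
/- Let a > b > c > d > 0 and q_x, q_y > 0 with q_x/q_y < Q, where Q = (√(B'² + 4Aa) - B')/(2A), A = bcd/(a(c-d)), B' = b - c + bc/(c-d). Set G = a q_y(c-d)/(bc) + d q_x/c and D = q_y(a q_y - (b-c)q_x)/(bc). Then D > 0 and G²/(4D) < a/4, i.e. the local maximum of the total catch on (0, E_y-ext), attained at E₁ = G/(2D), is strictly smaller than the maximum a/4 of the prey-only catch attained at E₂ = a/(2q_x). -/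
set_option maxHeartbeats 1000000


theorem stmt_13 (a b c d qx qy : ℝ) (hd : 0 < d) (hdc : d < c) (hcb : c < b)
    (hba : b < a) (hqx : 0 < qx) (hqy : 0 < qy)
    (hQ : qx / qy <
      (Real.sqrt ((b - c + b * c / (c - d)) ^ 2 + 4 * (b * c * d / (a * (c - d))) * a) -
        (b - c + b * c / (c - d))) / (2 * (b * c * d / (a * (c - d)))))
    (G D : ℝ)
    (hG : G = a * qy * (c - d) / (b * c) + d * qx / c)
    (hD : D = qy * (a * qy - (b - c) * qx) / (b * c)) :
    0 < D ∧ G ^ 2 / (4 * D) < a / 4 := by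
  have hcd : (0:ℝ) < c - d := by linarith
  have hc : (0:ℝ) < c := by linarith
  have hb : (0:ℝ) < b := by linarith
  have ha : (0:ℝ) < a := by linarith
  have hbc : (0:ℝ) < b - c := by linarith
  set A : ℝ := b * c * d / (a * (c - d)) with hAdef
  set B : ℝ := b - c + b * c / (c - d) with hBdef
  have hA : 0 < A := by
    apply div_pos (by positivity) (by positivity)
  have hB : 0 < B := by
    have h0 : 0 < b * c / (c - d) := by positivity
    rw [hBdef]; linarith
  have hS : (0:ℝ) ≤ B ^ 2 + 4 * A * a := by positivity
  set s : ℝ := Real.sqrt (B ^ 2 + 4 * A * a) with hsdef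
  have hs2 : s ^ 2 = B ^ 2 + 4 * A * a := Real.sq_sqrt hS
  have hs0 : 0 ≤ s := Real.sqrt_nonneg _
  rw [div_lt_div_iff₀ hqy (by positivity : (0:ℝ) < 2 * A)] at hQ
  -- hQ : qx * (2 * A) < (s - B) * qy
  have h1 : 2 * A * qx + B * qy < s * qy := by nlinarith [hQ]
  have hT : 0 < 2 * A * qx + B * qy := by positivity
  have hsq : (2 * A * qx + B * qy) ^ 2 < (s * qy) ^ 2 := by
    nlinarith [mul_pos (sub_pos.mpr h1)
      (show (0:ℝ) < s * qy + (2 * A * qx + B * qy) by nlinarith)]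
  have hA4 : 0 < 4 * A * (a * qy ^ 2 - (A * qx ^ 2 + B * qx * qy)) := by
    nlinarith [hsq, hs2, sq_nonneg qy]
  have keyAB : A * qx ^ 2 + B * qx * qy < a * qy ^ 2 := by
    have h4A : (0:ℝ) ≤ 4 * A := by positivity
    have h00 : 4 * A * 0 < 4 * A * (a * qy ^ 2 - (A * qx ^ 2 + B * qx * qy)) := by
      linarith [hA4]
    have := lt_of_mul_lt_mul_left h00 h4A
    linarith
  have hkey2 : b * c * d * qx ^ 2 + a * (c - d) * (b - c) * qx * qy + a * b * c * qx * qy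
      < a ^ 2 * (c - d) * qy ^ 2 := by
    have hpos : (0:ℝ) < a * (c - d) := by positivity
    have h := mul_lt_mul_of_pos_left keyAB hpos
    have e1 : a * (c - d) * (A * qx ^ 2 + B * qx * qy)
        = b * c * d * qx ^ 2 + a * (c - d) * (b - c) * qx * qy + a * b * c * qx * qy := by
      rw [hAdef, hBdef]
      field_simp
      ring
    have e2 : a * (c - d) * (a * qy ^ 2) = a ^ 2 * (c - d) * qy ^ 2 := by ring
    rw [e1, e2] at h
    exact h
  have hDnumpos : 0 < a * qy - (b - c) * qx := by
    nlinarith [hkey2, mul_pos (mul_pos (mul_pos hb hc) hd) (mul_pos hqx hqx),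
      mul_pos (mul_pos (mul_pos ha hb) hc) (mul_pos hqx hqy),
      mul_pos (mul_pos ha hcd) hqy]
  have hDpos : 0 < D := by
    rw [hD]; exact div_pos (mul_pos hqy hDnumpos) (mul_pos hb hc)
  refine ⟨hDpos, ?_⟩
  have hm : 0 < b * c - (c - d) ^ 2 := by nlinarith [mul_pos hd hd, mul_pos hd hc]
  have hPx2 : 0 < b * d * (b * (c ^ 2 - c * d + d ^ 2) - c * (c - d) ^ 2) := by
    have h2 : c * (c - d) ^ 2 < b * (c ^ 2 - c * d + d ^ 2) := by
      nlinarith [mul_pos hc hd, mul_pos hd hd, mul_pos hbc (mul_pos hd hd),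
        mul_pos hbc (mul_pos hc hc), mul_pos hbc (mul_pos hc hd)]
    have := mul_pos hb hd
    nlinarith [mul_pos (mul_pos hb hd) (sub_pos.mpr h2)]
  have hPxy : 0 < c * (c - d) ^ 3 + b * (b * c ^ 2 - 2 * c ^ 3 + 3 * c ^ 2 * d - d ^ 3) := by
    have e : c * (c - d) ^ 3 + b * (b * c ^ 2 - 2 * c ^ 3 + 3 * c ^ 2 * d - d ^ 3)
        = c ^ 2 * (b - c) ^ 2 + d * (b - c) * (2 * c ^ 2 + 2 * c * (c - d) - (c - d) ^ 2)
          + c * d ^ 2 * (c + 2 * (c - d)) := by ring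
    rw [e]
    have t1 : (0:ℝ) ≤ c ^ 2 * (b - c) ^ 2 := by positivity
    have t2 : 0 < d * (b - c) * (2 * c ^ 2 + 2 * c * (c - d) - (c - d) ^ 2) := by
      apply mul_pos (mul_pos hd hbc)
      nlinarith [mul_pos hd (show (0:ℝ) < 2 * c - d by linarith), mul_pos hc hcd]
    have t3 : 0 < c * d ^ 2 * (c + 2 * (c - d)) := by
      apply mul_pos (by positivity) (by linarith)
    linarith
  have hid : (c - d) * (a * b * c * (qy * (a * qy - (b - c) * qx))
        - (a * qy * (c - d) + b * d * qx) ^ 2)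
      = (b * c - (c - d) ^ 2) * (a ^ 2 * (c - d) * qy ^ 2
          - (b * c * d * qx ^ 2 + a * (c - d) * (b - c) * qx * qy + a * b * c * qx * qy))
        + (b * d * (b * (c ^ 2 - c * d + d ^ 2) - c * (c - d) ^ 2)) * qx ^ 2
        + a * (c * (c - d) ^ 3 + b * (b * c ^ 2 - 2 * c ^ 3 + 3 * c ^ 2 * d - d ^ 3))
            * (qx * qy) := by ring
  have h9 : 0 < (c - d) * (a * b * c * (qy * (a * qy - (b - c) * qx))
      - (a * qy * (c - d) + b * d * qx) ^ 2) := by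
    rw [hid]
    have p1 := mul_pos hm (show 0 < a ^ 2 * (c - d) * qy ^ 2
      - (b * c * d * qx ^ 2 + a * (c - d) * (b - c) * qx * qy + a * b * c * qx * qy) by linarith)
    have p2 := mul_pos hPx2 (pow_pos hqx 2)
    have p3 := mul_pos (mul_pos ha hPxy) (mul_pos hqx hqy)
    linarith
  have tgt : (a * qy * (c - d) + b * d * qx) ^ 2
      < a * b * c * (qy * (a * qy - (b - c) * qx)) := by
    have h := div_pos h9 hcd
    rw [mul_div_cancel_left₀ _ (ne_of_gt hcd)] at h
    linarith
  have hb0 : b ≠ 0 := ne_of_gt hb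
  have hc0 : c ≠ 0 := ne_of_gt hc
  have hGnum : G * (b * c) = a * qy * (c - d) + b * d * qx := by
    rw [hG]; field_simp
  have hDnum : D * (b * c) = qy * (a * qy - (b - c) * qx) := by
    rw [hD]; field_simp
  rw [div_lt_div_iff₀ (by positivity : (0:ℝ) < 4 * D) (by norm_num : (0:ℝ) < 4)]
  have h5 : G ^ 2 * (b * c) ^ 2 = (a * qy * (c - d) + b * d * qx) ^ 2 := by
    rw [← hGnum]; ring
  have h6 : (a * (4 * D)) * (b * c) ^ 2 = 4 * (a * b * c * (qy * (a * qy - (b - c) * qx))) := by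
    have e : (a * (4 * D)) * (b * c) ^ 2 = 4 * a * (b * c) * (D * (b * c)) := by ring
    rw [e, hDnum]; ring
  have hfin : (G ^ 2 * 4) * (b * c) ^ 2 < (a * (4 * D)) * (b * c) ^ 2 := by
    linarith [tgt, h5, h6]
  exact lt_of_mul_lt_mul_right hfin (by positivity)
end

section
/- Let α, β, γ : ℝ → ℝ be continuous strictly increasing bijections with α(0) = β(0) = γ(0) = 0, and let μ_x, μ_y, ρ > 0 and θ₁, θ₂, ν₁, ν₂ ∈ ℝ. Then the system x₁(θ₁ - α(x₁) - β(y₁)) + μ_x x₂ = 0, x₂(θ₂ - α(x₂) - β(y₂)) + ρ μ_x x₁ = 0, y₁(γ(x₁) - ν₁) + μ_y y₂ = 0, y₂(γ(x₂) - ν₂) + ρ μ_y y₁ = 0 has at most one solution (x₁, x₂, y₁, y₂) with all four coordinates strictly positive. -/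
set_option maxHeartbeats 1000000

lemma stmt_14_key (α β γ : ℝ → ℝ)
    (hα : StrictMono α) (hβ : StrictMono β) (hγ : StrictMono γ)
    (μx μy ρ : ℝ) (hμx : 0 < μx) (hμy : 0 < μy) (hρ : 0 < ρ)
    (θ₁ θ₂ ν₁ ν₂ : ℝ)
    (x₁ x₂ y₁ y₂ x₁' x₂' y₁' y₂' : ℝ)
    (hx₁ : 0 < x₁) (hx₂ : 0 < x₂) (hy₁ : 0 < y₁) (hy₂ : 0 < y₂)
    (hx₁' : 0 < x₁') (hx₂' : 0 < x₂') (hy₁' : 0 < y₁') (hy₂' : 0 < y₂')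
    (e1 : x₁ * (θ₁ - α x₁ - β y₁) + μx * x₂ = 0)
    (e2 : x₂ * (θ₂ - α x₂ - β y₂) + ρ * μx * x₁ = 0)
    (e3 : y₁ * (γ x₁ - ν₁) + μy * y₂ = 0)
    (e4 : y₂ * (γ x₂ - ν₂) + ρ * μy * y₁ = 0)
    (e1' : x₁' * (θ₁ - α x₁' - β y₁') + μx * x₂' = 0)
    (e2' : x₂' * (θ₂ - α x₂' - β y₂') + ρ * μx * x₁' = 0)
    (e3' : y₁' * (γ x₁' - ν₁) + μy * y₂' = 0)
    (e4' : y₂' * (γ x₂' - ν₂) + ρ * μy * y₁' = 0)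
    (hle : x₁ ≤ x₁') :
    x₁ = x₁' ∧ x₂ = x₂' ∧ y₁ = y₁' ∧ y₂ = y₂' := by
  have hne1 : x₁ ≠ 0 := ne_of_gt hx₁
  have hne2 : x₂ ≠ 0 := ne_of_gt hx₂
  have hne3 : y₁ ≠ 0 := ne_of_gt hy₁
  have hne4 : y₂ ≠ 0 := ne_of_gt hy₂
  have hne1' : x₁' ≠ 0 := ne_of_gt hx₁'
  have hne2' : x₂' ≠ 0 := ne_of_gt hx₂'
  have hne3' : y₁' ≠ 0 := ne_of_gt hy₁'
  have hne4' : y₂' ≠ 0 := ne_of_gt hy₂'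
  have h1 : β y₁ = θ₁ - α x₁ + μx * (x₂ / x₁) := by
    field_simp; linarith [e1]
  have h1' : β y₁' = θ₁ - α x₁' + μx * (x₂' / x₁') := by
    field_simp; linarith [e1']
  have h2 : β y₂ = θ₂ - α x₂ + ρ * μx * (x₁ / x₂) := by
    field_simp; linarith [e2]
  have h2' : β y₂' = θ₂ - α x₂' + ρ * μx * (x₁' / x₂') := by
    field_simp; linarith [e2']
  have h3 : ν₁ - γ x₁ = μy * (y₂ / y₁) := by
    field_simp; linarith [e3]
  have h3' : ν₁ - γ x₁' = μy * (y₂' / y₁') := by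
    field_simp; linarith [e3']
  have h4 : ν₂ - γ x₂ = ρ * μy * (y₁ / y₂) := by
    field_simp; linarith [e4]
  have h4' : ν₂ - γ x₂' = ρ * μy * (y₁' / y₂') := by
    field_simp; linarith [e4']
  -- step 1: γ x₁ ≤ γ x₁', hence y₂'/y₁' ≤ y₂/y₁
  have hg1 : γ x₁ ≤ γ x₁' := hγ.monotone hle
  have hr : y₂' / y₁' ≤ y₂ / y₁ := by
    have h : μy * (y₂' / y₁') ≤ μy * (y₂ / y₁) := by linarith [h3, h3', hg1]
    exact le_of_mul_le_mul_left h hμy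
  -- step 2: y₁/y₂ ≤ y₁'/y₂', hence γ x₂' ≤ γ x₂, hence x₂' ≤ x₂
  have hr2 : y₁ / y₂ ≤ y₁' / y₂' := by
    rw [div_le_div_iff₀ hy₂ hy₂']
    rw [div_le_div_iff₀ hy₁' hy₁] at hr
    linarith [hr, mul_comm y₁ y₂', mul_comm y₁' y₂, mul_comm y₂' y₁, mul_comm y₂ y₁']
  have hg2 : γ x₂' ≤ γ x₂ := by
    have h := mul_le_mul_of_nonneg_left hr2 (mul_pos hρ hμy).le
    linarith [h4, h4']
  have hx2le : x₂' ≤ x₂ := hγ.le_iff_le.mp hg2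
  -- step 3: x₂'/x₁' ≤ x₂/x₁, hence y₁' ≤ y₁
  have hs : x₂' / x₁' ≤ x₂ / x₁ := by
    rw [div_le_div_iff₀ hx₁' hx₁]
    exact mul_le_mul hx2le hle hx₁.le hx₂.le
  have hby1 : β y₁' ≤ β y₁ := by
    have hax : α x₁ ≤ α x₁' := hα.monotone hle
    have h := mul_le_mul_of_nonneg_left hs hμx.le
    linarith [h1, h1']
  have hy1le : y₁' ≤ y₁ := hβ.le_iff_le.mp hby1
  -- step 4: x₁/x₂ ≤ x₁'/x₂', hence y₂ ≤ y₂'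
  have hs2 : x₁ / x₂ ≤ x₁' / x₂' := by
    rw [div_le_div_iff₀ hx₂ hx₂']
    exact mul_le_mul hle hx2le hx₂'.le hx₁'.le
  have hby2 : β y₂ ≤ β y₂' := by
    have hax : α x₂' ≤ α x₂ := hα.monotone hx2le
    have h := mul_le_mul_of_nonneg_left hs2 (mul_pos hρ hμx).le
    linarith [h2, h2']
  have hy2le : y₂ ≤ y₂' := hβ.le_iff_le.mp hby2
  -- step 5: ratios are equal, conclude
  have hreq : y₂ / y₁ = y₂' / y₁' := by
    refine le_antisymm ?_ hr
    rw [div_le_div_iff₀ hy₁ hy₁']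
    exact mul_le_mul hy2le hy1le hy₁'.le hy₂'.le
  have hx1eq : x₁ = x₁' := hγ.injective (by rw [hreq] at h3; linarith [h3, h3'])
  have hreq2 : y₁ / y₂ = y₁' / y₂' := by
    rw [← inv_div y₂ y₁, ← inv_div y₂' y₁', hreq]
  have hx2eq : x₂ = x₂' := hγ.injective (by rw [hreq2] at h4; linarith [h4, h4'])
  have hseq : x₂ / x₁ = x₂' / x₁' := by rw [hx1eq, hx2eq]
  have hy1eq : y₁ = y₁' := hβ.injective (by rw [hseq, hx1eq] at h1; linarith [h1, h1'])
  have hy2eq : y₂ = y₂' := hβ.injective (by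
    have hq : x₁ / x₂ = x₁' / x₂' := by rw [hx1eq, hx2eq]
    rw [hq, hx2eq] at h2; linarith [h2, h2'])
  exact ⟨hx1eq, hx2eq, hy1eq, hy2eq⟩

theorem stmt_14 (α β γ : ℝ → ℝ)
    (hαc : Continuous α) (hβc : Continuous β) (hγc : Continuous γ)
    (hα : StrictMono α) (hβ : StrictMono β) (hγ : StrictMono γ)
    (hαb : Function.Bijective α) (hβb : Function.Bijective β) (hγb : Function.Bijective γ)
    (hα0 : α 0 = 0) (hβ0 : β 0 = 0) (hγ0 : γ 0 = 0)
    (μx μy ρ : ℝ) (hμx : 0 < μx) (hμy : 0 < μy) (hρ : 0 < ρ)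
    (θ₁ θ₂ ν₁ ν₂ : ℝ)
    (x₁ x₂ y₁ y₂ x₁' x₂' y₁' y₂' : ℝ)
    (hx₁ : 0 < x₁) (hx₂ : 0 < x₂) (hy₁ : 0 < y₁) (hy₂ : 0 < y₂)
    (hx₁' : 0 < x₁') (hx₂' : 0 < x₂') (hy₁' : 0 < y₁') (hy₂' : 0 < y₂')
    (e1 : x₁ * (θ₁ - α x₁ - β y₁) + μx * x₂ = 0)
    (e2 : x₂ * (θ₂ - α x₂ - β y₂) + ρ * μx * x₁ = 0)
    (e3 : y₁ * (γ x₁ - ν₁) + μy * y₂ = 0)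
    (e4 : y₂ * (γ x₂ - ν₂) + ρ * μy * y₁ = 0)
    (e1' : x₁' * (θ₁ - α x₁' - β y₁') + μx * x₂' = 0)
    (e2' : x₂' * (θ₂ - α x₂' - β y₂') + ρ * μx * x₁' = 0)
    (e3' : y₁' * (γ x₁' - ν₁) + μy * y₂' = 0)
    (e4' : y₂' * (γ x₂' - ν₂) + ρ * μy * y₁' = 0) :
    x₁ = x₁' ∧ x₂ = x₂' ∧ y₁ = y₁' ∧ y₂ = y₂' := by
  rcases le_total x₁ x₁' with h | h
  · exact stmt_14_key α β γ hα hβ hγ μx μy ρ hμx hμy hρ θ₁ θ₂ ν₁ ν₂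
      x₁ x₂ y₁ y₂ x₁' x₂' y₁' y₂' hx₁ hx₂ hy₁ hy₂ hx₁' hx₂' hy₁' hy₂'
      e1 e2 e3 e4 e1' e2' e3' e4' h
  · obtain ⟨a, b, c, d⟩ := stmt_14_key α β γ hα hβ hγ μx μy ρ hμx hμy hρ θ₁ θ₂ ν₁ ν₂
      x₁' x₂' y₁' y₂' x₁ x₂ y₁ y₂ hx₁' hx₂' hy₁' hy₂' hx₁ hx₂ hy₁ hy₂
      e1' e2' e3' e4' e1 e2 e3 e4 h
    exact ⟨a.symm, b.symm, c.symm, d.symm⟩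
end

section
/- Let r, q, p > 0 and p' > p, and let z₁ ∈ (0, p), z₁' ∈ (0, p'), z₂, z₂' ∈ (0, q) satisfy (z₁ - p)(z₂ - q) = r and (z₁' - p')(z₂' - q) = r. If z₁/z₂ = z₁'/z₂', then z₁ < z₁' and z₂ < z₂'. -/
/-!
Write both points on the common ray as `(t s, s)` and `(t s', s')` with slope `t > 0`.
Left of both asymptotes, `(p - t s) (q - s)` strictly decreases in `s` and strictly increases
in `p`; so with the same value `r` on both hyperbolas, the larger `p'` forces `s < s'`, and then
also `t s < t s'`.
-/

lemma lt_of_mul_sub_eq_mul_sub_of_lt {t p p' q s s' : ℝ} (ht : 0 ≤ t) (hp : p < p')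
    (hsp : t * s < p) (hsq : s < q)
    (h : (t * s - p) * (s - q) = (t * s' - p') * (s' - q)) :
    s < s' := by
  by_contra! hle
  have hpos : 0 < p - t * s := sub_pos.2 hsp
  have hfirst : p - t * s < p' - t * s' := by linarith [mul_le_mul_of_nonneg_left hle ht]
  have hsecond : q - s ≤ q - s' := by linarith
  have : (t * s - p) * (s - q) < (t * s' - p') * (s' - q) :=
    calc (t * s - p) * (s - q) = (p - t * s) * (q - s) := by ring
      _ < (p' - t * s') * (q - s) := mul_lt_mul_of_pos_right hfirst (sub_pos.2 hsq)
      _ ≤ (p' - t * s') * (q - s') := mul_le_mul_of_nonneg_left hsecond (hpos.trans hfirst).le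
      _ = (t * s' - p') * (s' - q) := by ring
  exact this.ne h

theorem stmt_17_general (r q p p' z₁ z₁' z₂ z₂' : ℝ)
    (hp' : p < p')
    (hz₁ : z₁ ∈ Set.Ioo 0 p)
    (hz₂ : z₂ ∈ Set.Ioo 0 q) (hz₂' : z₂' ∈ Set.Ioo 0 q)
    (h1 : (z₁ - p) * (z₂ - q) = r) (h2 : (z₁' - p') * (z₂' - q) = r)
    (hray : z₁ / z₂ = z₁' / z₂') :
    z₁ < z₁' ∧ z₂ < z₂' := by
  set t := z₁ / z₂
  have ht : 0 < t := div_pos hz₁.1 hz₂.1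
  have e₁ : z₁ = t * z₂ := (div_mul_cancel₀ _ hz₂.1.ne').symm
  have e₂ : z₁' = t * z₂' := by rw [hray, div_mul_cancel₀ _ hz₂'.1.ne']
  have hz : z₂ < z₂' :=
    lt_of_mul_sub_eq_mul_sub_of_lt ht.le hp' (e₁ ▸ hz₁.2) hz₂.2 (by rw [← e₁, ← e₂, h1, h2])
  exact ⟨by rw [e₁, e₂]; exact mul_lt_mul_of_pos_left hz ht, hz⟩

theorem stmt_17 (r q p p' z₁ z₁' z₂ z₂' : ℝ)
    (hr : 0 < r) (hq : 0 < q) (hp : 0 < p) (hp' : p < p')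
    (hz₁ : z₁ ∈ Set.Ioo 0 p) (hz₁' : z₁' ∈ Set.Ioo 0 p')
    (hz₂ : z₂ ∈ Set.Ioo 0 q) (hz₂' : z₂' ∈ Set.Ioo 0 q)
    (h1 : (z₁ - p) * (z₂ - q) = r) (h2 : (z₁' - p') * (z₂' - q) = r)
    (hray : z₁ / z₂ = z₁' / z₂') :
    z₁ < z₁' ∧ z₂ < z₂' :=
  stmt_17_general r q p p' z₁ z₁' z₂ z₂' hp' hz₁ hz₂ hz₂' h1 h2 hray
end

section
/- Let A', B', C', D' > 0 and x̄₁, x̄₂ > 0, and suppose (x₁⁰, x₂⁰) with x₁⁰, x₂⁰ > 0 satisfies x₂⁰ = (1/C') x₁⁰((x₁⁰ - x̄₁) + C') and x₁⁰ = (1/(C'D')) x₂⁰((x₂⁰ - x̄₂) + C'D'). Then (x₁⁰ - x̄₁ - B')(x₂⁰ - x̄₂ - B'D') ≤ B'² D'. -/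
theorem stmt_18 (A' B' C' D' xb₁ xb₂ x₁ x₂ : ℝ)
    (hA : 0 < A') (hB : 0 < B') (hC : 0 < C') (hD : 0 < D')
    (hxb₁ : 0 < xb₁) (hxb₂ : 0 < xb₂) (hx₁ : 0 < x₁) (hx₂ : 0 < x₂)
    (h1 : x₂ = (1 / C') * x₁ * ((x₁ - xb₁) + C'))
    (h2 : x₁ = (1 / (C' * D')) * x₂ * ((x₂ - xb₂) + C' * D')) :
    (x₁ - xb₁ - B') * (x₂ - xb₂ - B' * D') ≤ B' ^ 2 * D' := by
  have hC' : C' ≠ 0 := ne_of_gt hC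
  have hD' : D' ≠ 0 := ne_of_gt hD
  have e1 : x₁ * (x₁ - xb₁) = C' * (x₂ - x₁) := by
    field_simp at h1; nlinarith [h1]
  have e2 : x₂ * (x₂ - xb₂) = C' * D' * (x₁ - x₂) := by
    field_simp at h2; nlinarith [h2]
  have hpos : 0 < x₁ * x₂ := mul_pos hx₁ hx₂
  have eq : (x₁ - xb₁ - B') * (x₂ - xb₂ - B' * D') * (x₁ * x₂)
      = (C' * (x₂ - x₁) - B' * x₁) * (C' * D' * (x₁ - x₂) - B' * D' * x₂) := by
    linear_combination (x₂ * (x₂ - xb₂) - B' * D' * x₂) * e1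
      + (C' * (x₂ - x₁) - B' * x₁) * e2
  have hnn : 0 ≤ (C' ^ 2 * D' + B' * C' * D') * (x₂ - x₁) ^ 2 := by positivity
  have key : (x₁ - xb₁ - B') * (x₂ - xb₂ - B' * D') * (x₁ * x₂)
      ≤ B' ^ 2 * D' * (x₁ * x₂) := by
    rw [eq]; nlinarith [hnn]
  exact le_of_mul_le_mul_right key hpos
end

section
/- Let α, β, γ : ℝ → ℝ be continuous increasing bijections vanishing at 0, μ_x, μ_y, ρ > 0, θ₁, θ₂ ∈ ℝ, and ν₁ ν₂ < ρ μ_y² with ν₁, ν₂ > 0. If (x₁, x₂, y₁, y₂) is a nonnegative solution of the steady-state system x₁(θ₁ - α(x₁) - β(y₁)) + μ_x x₂ = 0, x₂(θ₂ - α(x₂) - β(y₂)) + ρ μ_x x₁ = 0, y₁(γ(x₁) - ν₁) + μ_y y₂ = 0, y₂(γ(x₂) - ν₂) + ρ μ_y y₁ = 0 with x₁ = 0, then x₂ = 0 and y₁ = y₂ = 0. -/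
theorem stmt_19 (α β γ : ℝ → ℝ)
    (hαc : Continuous α) (hβc : Continuous β) (hγc : Continuous γ)
    (hα : StrictMono α) (hβ : StrictMono β) (hγ : StrictMono γ)
    (hαb : Function.Bijective α) (hβb : Function.Bijective β) (hγb : Function.Bijective γ)
    (hα0 : α 0 = 0) (hβ0 : β 0 = 0) (hγ0 : γ 0 = 0)
    (μx μy ρ θ₁ θ₂ ν₁ ν₂ : ℝ) (hμx : 0 < μx) (hμy : 0 < μy) (hρ : 0 < ρ)
    (hν₁ : 0 < ν₁) (hν₂ : 0 < ν₂) (hνν : ν₁ * ν₂ < ρ * μy ^ 2)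
    (x₁ x₂ y₁ y₂ : ℝ)
    (hx₁ : 0 ≤ x₁) (hx₂ : 0 ≤ x₂) (hy₁ : 0 ≤ y₁) (hy₂ : 0 ≤ y₂)
    (e1 : x₁ * (θ₁ - α x₁ - β y₁) + μx * x₂ = 0)
    (e2 : x₂ * (θ₂ - α x₂ - β y₂) + ρ * μx * x₁ = 0)
    (e3 : y₁ * (γ x₁ - ν₁) + μy * y₂ = 0)
    (e4 : y₂ * (γ x₂ - ν₂) + ρ * μy * y₁ = 0)
    (hx₁0 : x₁ = 0) :
    x₂ = 0 ∧ y₁ = 0 ∧ y₂ = 0 := by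
  subst hx₁0
  have hx2 : x₂ = 0 := by
    have : μx * x₂ = 0 := by linarith [e1]
    exact (mul_eq_zero.mp this).resolve_left (ne_of_gt hμx)
  subst hx2
  rw [hγ0] at e3 e4
  have hy1 : y₁ = 0 := by
    have h1 : -ν₁ * y₁ + μy * y₂ = 0 := by linarith [e3]
    have h2 : -ν₂ * y₂ + ρ * μy * y₁ = 0 := by linarith [e4]
    have key : (ρ * μy ^ 2 - ν₁ * ν₂) * y₁ = 0 := by nlinarith [h1, h2]
    have : ρ * μy ^ 2 - ν₁ * ν₂ ≠ 0 := by nlinarith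
    exact (mul_eq_zero.mp key).resolve_left this
  subst hy1
  have : μy * y₂ = 0 := by linarith [e3]
  exact ⟨rfl, rfl, (mul_eq_zero.mp this).resolve_left (ne_of_gt hμy)⟩
end
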